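/- Let N and I be natural numbers with N ≥ 1, let u and g be units of the ring ZMod (N²) with the underlying element of u equal to 1 + N, and let x', r, y : Fin I → ℤ. Define the ciphertexts ct i = u^(x' i) · g^(r i) in (ZMod (N²))ˣ and the functional key skf = ∑ i, (r i) · (y i) in ℤ. Then (∏ i, (ct i)^(y i)) · g^(−skf) = u^(∑ i, (x' i) · (y i)) in (ZMod (N²))ˣ, and the underlying element of this product in ZMod (N²) equals 1 + ((∑ i, (x' i) · (y i) : ℤ) : ZMod (N²)) · N. -/

import Mathlib

open Finset

lemma NN0 (N : ℕ) : (N : ZMod (N ^ 2)) * N = 0 := by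
  have : ((N ^ 2 : ℕ) : ZMod (N ^ 2)) = 0 := ZMod.natCast_self _
  push_cast at this
  linear_combination this

lemma upow (N : ℕ) (u : (ZMod (N ^ 2))ˣ)
    (hu : (u : ZMod (N ^ 2)) = 1 + (N : ZMod (N ^ 2))) (m : ℤ) :
    ((u ^ m : (ZMod (N ^ 2))ˣ) : ZMod (N ^ 2)) = 1 + (m : ZMod (N ^ 2)) * N := by
  have h0 := NN0 N
  induction m using Int.induction_on with
  | zero => simp
  | succ k ih =>
      rw [zpow_add_one, Units.val_mul, ih, hu]
      push_cast
      ring_nf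
      linear_combination (k : ZMod (N ^ 2)) * h0
  | pred k ih =>
      have hstep : u ^ (-(k : ℤ) - 1) * u = u ^ (-(k : ℤ)) := by
        rw [← zpow_add_one]; ring_nf
      have hval : ((u ^ (-(k : ℤ) - 1) : (ZMod (N ^ 2))ˣ) : ZMod (N ^ 2)) * (u : ZMod (N ^ 2))
          = 1 + ((-(k : ℤ) : ℤ) : ZMod (N ^ 2)) * N := by
        rw [← Units.val_mul, hstep, ih]
      have hcand : (1 + ((-(k : ℤ) - 1 : ℤ) : ZMod (N ^ 2)) * N) * (u : ZMod (N ^ 2))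
          = 1 + ((-(k : ℤ) : ℤ) : ZMod (N ^ 2)) * N := by
        rw [hu]; push_cast; ring_nf; linear_combination (-(k:ZMod (N^2)) - 1) * h0
      have := hval.trans hcand.symm
      exact u.isUnit.mul_left_injective this


/-- Correctness of DEFE aggregated decryption: with ciphertexts
`ct i = u^(x' i) · g^(r i)` in `(ZMod (N²))ˣ` (where `u` lifts `1 + N`) and
functional key `skf = ∑ i, r i · y i`, the aggregate
`(∏ i, (ct i)^(y i)) · g^(−skf)` equals `u^(∑ i, x' i · y i)`, whose
underlying ring element is `1 + (∑ i, x' i · y i)·N`. -/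
theorem defe_aggdec_correct (N I : ℕ) (hN : 1 ≤ N) (u g : (ZMod (N ^ 2))ˣ)
    (hu : (u : ZMod (N ^ 2)) = 1 + (N : ZMod (N ^ 2)))
    (x' r y : Fin I → ℤ) :
    (∏ i, (u ^ (x' i) * g ^ (r i)) ^ (y i)) * g ^ (-(∑ i, r i * y i))
        = u ^ (∑ i, x' i * y i) ∧
    ((((∏ i, (u ^ (x' i) * g ^ (r i)) ^ (y i)) * g ^ (-(∑ i, r i * y i)) :
        (ZMod (N ^ 2))ˣ)) : ZMod (N ^ 2))
        = 1 + ((∑ i, x' i * y i : ℤ) : ZMod (N ^ 2)) * (N : ZMod (N ^ 2)) := by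
  have husum : ∀ (a : (ZMod (N ^ 2))ˣ) (f : Fin I → ℤ), ∏ i, a ^ (f i) = a ^ (∑ i, f i) := by
    intro a f
    have : ∀ s : Finset (Fin I), ∏ i ∈ s, a ^ (f i) = a ^ ∑ i ∈ s, f i := by
      intro s
      induction s using Finset.induction_on with
      | empty => simp
      | insert _ _ h ih => rw [Finset.prod_insert h, Finset.sum_insert h, ih, zpow_add]
    exact this univ
  have h1 : (∏ i, (u ^ (x' i) * g ^ (r i)) ^ (y i)) * g ^ (-(∑ i, r i * y i))
      = u ^ (∑ i, x' i * y i) := by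
    simp_rw [mul_zpow, ← zpow_mul, Finset.prod_mul_distrib, husum]
    rw [mul_assoc, ← zpow_add, add_neg_cancel, zpow_zero, mul_one]
  refine ⟨h1, ?_⟩
  rw [h1, upow N u hu]
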